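/- Let A and M be 2×2 real symmetric positive definite matrices with MA = AM, and let k₀ ≥ 2 be an integer. Let g : ℕ → ℝ² and α : ℕ → ℝ satisfy g_{j+1} = (I − α_j A)g_j for all j, with α_j = ⟨g_{j-1}, M g_{j-1}⟩/⟨g_{j-1}, M A g_{j-1}⟩ for every j with 1 ≤ j ≤ k₀+2 and j ≠ k₀ (α₀ arbitrary). Suppose g_j ≠ 0 for all 0 ≤ j ≤ k₀+2, and let q ∈ ℝ², q ≠ 0, satisfy (I − α_{k₀-2} A)q = g_{k₀-2}. Define H₁₁ = ⟨Mq, A(Mq)⟩/‖Mq‖², H₁₂ = ⟨Mq, A g_{k₀}⟩/(‖Mq‖·‖g_{k₀}‖), H₂₂ = ⟨g_{k₀}, A g_{k₀}⟩/‖g_{k₀}‖², and set α_{k₀} = 2/((H₁₁+H₂₂) + √((H₁₁−H₂₂)² + 4H₁₂²)). Then g_{k₀+3} = 0. -/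

import Mathlib

/-!
Write `k₀ = k + 2`. Since `g_k = (I - α_k A) q` and `g_{k+1} = (I - α_k A) g_k`, moving `I - α_k A`
across the `M`- and `MA`-weighted products turns the numerator and denominator of `α_{k+1}` into
`⟨q, M g_{k+1}⟩` and `⟨q, MA g_{k+1}⟩`, so `g_{k₀} = (I - α_{k+1} A) g_{k+1}` is orthogonal to `Mq`.
In the orthonormal frame `Mq / ‖Mq‖, g_{k₀} / ‖g_{k₀}‖` of `ℝ²` the matrix `A` is `H`, and `α_{k₀}`
is the reciprocal of its larger eigenvalue; by Cayley–Hamilton `g_{k₀+1} = (I - α_{k₀} A) g_{k₀}` is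
then an eigenvector of `A` for the other eigenvalue `μ`. The gradients stay on this eigenline, the
stepsize at `k₀ + 2` equals `1 / μ`, and `g_{k₀+3} = 0`.
-/

open Matrix

namespace Matrix

theorem PosDef.isSymm {n : Type*} {A : Matrix n n ℝ} (hA : A.PosDef) : A.IsSymm :=
  isHermitian_iff_isSymm.mp hA.isHermitian

variable {n : Type*} [Fintype n]

theorem IsSymm.dotProduct_mulVec_comm {R : Type*} [CommSemiring R] {N : Matrix n n R}
    (hN : N.IsSymm) (x y : n → R) : x ⬝ᵥ (N *ᵥ y) = (N *ᵥ x) ⬝ᵥ y := by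
  rw [dotProduct_mulVec, ← vecMul_transpose, hN.eq]

theorem IsSymm.dotProduct_mulVec_sub_smul {R : Type*} [CommRing R] {A N : Matrix n n R}
    (hA : A.IsSymm) (hNA : N * A = A * N) (c : R) (x y : n → R) :
    y ⬝ᵥ (N *ᵥ (x - c • (A *ᵥ x))) = (y - c • (A *ᵥ y)) ⬝ᵥ (N *ᵥ x) := by
  rw [mulVec_sub, mulVec_smul, mulVec_mulVec, hNA, ← mulVec_mulVec, dotProduct_sub,
    dotProduct_smul, hA.dotProduct_mulVec_comm, sub_dotProduct, smul_dotProduct]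

theorem PosDef.dotProduct_mulVec_pos' {A : Matrix n n ℝ} (hA : A.PosDef) {x : n → ℝ}
    (hx : x ≠ 0) : 0 < x ⬝ᵥ (A *ᵥ x) := by
  simpa using hA.dotProduct_mulVec_pos hx

open scoped ComplexOrder MatrixOrder in
theorem PosDef.mul_of_commute [DecidableEq n] {𝕜 : Type*} [RCLike 𝕜] {A B : Matrix n n 𝕜}
    (hA : A.PosDef) (hB : B.PosDef) (h : Commute A B) : (A * B).PosDef :=
  ((hA.isStrictlyPositive.commute_iff hB.isStrictlyPositive).mp h).posDef

theorem mulVec_sub_inv_smul_mulVec {K : Type*} [Field K] {A : Matrix n n K} {w : n → K}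
    {μ₁ μ₂ : K} (hμ₁ : μ₁ ≠ 0)
    (hA : A *ᵥ (A *ᵥ w) = (μ₁ + μ₂) • (A *ᵥ w) - (μ₁ * μ₂) • w) :
    A *ᵥ (w - μ₁⁻¹ • (A *ᵥ w)) = μ₂ • (w - μ₁⁻¹ • (A *ᵥ w)) := by
  rw [mulVec_sub, mulVec_smul, hA]
  match_scalars <;> field_simp
  ring

end Matrix

section Gradient

variable {n : Type*} [Fintype n]

theorem dotProduct_self_pos {u : n → ℝ} (hu : u ≠ 0) : 0 < u ⬝ᵥ u := by
  simpa using dotProduct_star_self_pos_iff.mpr hu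

noncomputable def rayleighQuotient (A : Matrix n n ℝ) (x : n → ℝ) : ℝ :=
  x ⬝ᵥ (A *ᵥ x) / (x ⬝ᵥ x)

theorem rayleighQuotient_pos {A : Matrix n n ℝ} (hA : A.PosDef) {x : n → ℝ} (hx : x ≠ 0) :
    0 < rayleighQuotient A x :=
  div_pos (hA.dotProduct_mulVec_pos' hx) (dotProduct_self_pos hx)

/-- The stepsize (glstep1) computed from the previous gradient `x`, with `M` standing for `Ψ(A)`. -/
noncomputable def stepsize (M A : Matrix n n ℝ) (x : n → ℝ) : ℝ :=
  (x ⬝ᵥ (M *ᵥ x)) / (x ⬝ᵥ (M *ᵥ (A *ᵥ x)))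

theorem mulVec_dotProduct_add_two_eq_zero {A M : Matrix n n ℝ} (hA : A.IsSymm)
    (hM : M.IsSymm) (hMA : M * A = A * M) {g : ℕ → n → ℝ} {α : ℕ → ℝ}
    (hrec : ∀ j, g (j + 1) = g j - α j • (A *ᵥ g j)) {k : ℕ} {q : n → ℝ}
    (hq : q - α k • (A *ᵥ q) = g k) (hα : α (k + 1) = stepsize M A (g k))
    (hden : g k ⬝ᵥ (M *ᵥ (A *ᵥ g k)) ≠ 0) :
    (M *ᵥ q) ⬝ᵥ g (k + 2) = 0 := by
  have hshift (N : Matrix n n ℝ) (hN : N * A = A * N) :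
      q ⬝ᵥ (N *ᵥ g (k + 1)) = g k ⬝ᵥ (N *ᵥ g k) := by
    rw [hrec k, hA.dotProduct_mulVec_sub_smul hN, hq]
  have hMAA : M * A * A = A * (M * A) := by rw [← mul_assoc, ← hMA]
  rw [← hM.dotProduct_mulVec_comm, hrec (k + 1), mulVec_sub, mulVec_smul, dotProduct_sub,
    dotProduct_smul, mulVec_mulVec, hshift M hMA, hshift (M * A) hMAA, hα, stepsize,
    ← mulVec_mulVec, smul_eq_mul, div_mul_cancel₀ _ hden, sub_self]

theorem add_two_eq_zero_of_mulVec_eq_smul {A M : Matrix n n ℝ} (hA : A.PosDef)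
    (hM : M.PosDef) {g : ℕ → n → ℝ} {α : ℕ → ℝ}
    (hrec : ∀ j, g (j + 1) = g j - α j • (A *ᵥ g j)) {j : ℕ} {μ : ℝ} (hg : g j ≠ 0)
    (heig : A *ᵥ g j = μ • g j) (hα : α (j + 1) = stepsize M A (g j)) :
    g (j + 2) = 0 := by
  have hμ : μ ≠ 0 := by
    rintro rfl
    simpa [heig] using hA.dotProduct_mulVec_pos' hg
  have hα' : α (j + 1) = μ⁻¹ := by
    rw [hα, stepsize, heig, mulVec_smul, dotProduct_smul, smul_eq_mul,
      div_mul_cancel_right₀ (hM.dotProduct_mulVec_pos' hg).ne']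
  have heig' : A *ᵥ g (j + 1) = μ • g (j + 1) := by
    rw [hrec j, mulVec_sub, mulVec_smul, heig, mulVec_smul, heig, smul_sub, smul_comm μ (α j)]
  rw [hrec (j + 1), heig', hα', smul_smul, inv_mul_cancel₀ hμ, one_smul, sub_self]

end Gradient

theorem eq_zero_of_dotProduct_eq_zero {u w x : Fin 2 → ℝ} (hu : u ≠ 0) (hw : w ≠ 0)
    (huw : u ⬝ᵥ w = 0) (hux : u ⬝ᵥ x = 0) (hwx : w ⬝ᵥ x = 0) : x = 0 := by
  have hu' := dotProduct_self_pos hu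
  have hw' := dotProduct_self_pos hw
  simp only [dotProduct, Fin.sum_univ_two] at hu' hw' huw hux hwx
  -- Lagrange's identity: `det[u w]² = ‖u‖²‖w‖² - ⟨u, w⟩²`
  have hdet : u 0 * w 1 - u 1 * w 0 ≠ 0 := by
    intro h
    nlinarith [mul_pos hu' hw']
  ext i
  fin_cases i
  · exact (mul_eq_zero.mp (by linear_combination w 1 * hux - u 1 * hwx :
      (u 0 * w 1 - u 1 * w 0) * x 0 = 0)).resolve_left hdet
  · exact (mul_eq_zero.mp (by linear_combination u 0 * hwx - w 0 * hux :
      (u 0 * w 1 - u 1 * w 0) * x 1 = 0)).resolve_left hdet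

theorem eq_smul_add_smul_of_dotProduct_eq_zero {u w : Fin 2 → ℝ} (hu : u ≠ 0) (hw : w ≠ 0)
    (huw : u ⬝ᵥ w = 0) (x : Fin 2 → ℝ) :
    x = ((u ⬝ᵥ x) / (u ⬝ᵥ u)) • u + ((w ⬝ᵥ x) / (w ⬝ᵥ w)) • w := by
  have hu' := (dotProduct_self_pos hu).ne'
  have hw' := (dotProduct_self_pos hw).ne'
  rw [← sub_eq_zero]
  apply eq_zero_of_dotProduct_eq_zero hu hw huw
  · simp only [dotProduct_sub, dotProduct_add, dotProduct_smul, smul_eq_mul, huw, mul_zero,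
      add_zero, div_mul_cancel₀ _ hu', sub_self]
  · simp only [dotProduct_sub, dotProduct_add, dotProduct_smul, smul_eq_mul, dotProduct_comm w u,
      huw, mul_zero, zero_add, div_mul_cancel₀ _ hw', sub_self]

-- Cayley–Hamilton applied to `w`: with `ρ = rayleighQuotient A`, in the orthonormal frame
-- `u / ‖u‖, w / ‖w‖` the matrix `A` has trace `ρ u + ρ w` and determinant
-- `ρ u * ρ w - ⟨u, A w⟩² / (‖u‖² ‖w‖²)`.
theorem mulVec_mulVec_eq_of_dotProduct_eq_zero {A : Matrix (Fin 2) (Fin 2) ℝ} (hA : A.IsSymm)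
    {u w : Fin 2 → ℝ} (hu : u ≠ 0) (hw : w ≠ 0) (huw : u ⬝ᵥ w = 0) :
    A *ᵥ (A *ᵥ w) = (rayleighQuotient A u + rayleighQuotient A w) • (A *ᵥ w) -
      (rayleighQuotient A u * rayleighQuotient A w -
        (u ⬝ᵥ (A *ᵥ w)) ^ 2 / ((u ⬝ᵥ u) * (w ⬝ᵥ w))) • w := by
  have hu' := (dotProduct_self_pos hu).ne'
  have hw' := (dotProduct_self_pos hw).ne'
  have hwu : w ⬝ᵥ (A *ᵥ u) = u ⬝ᵥ (A *ᵥ w) := by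
    rw [hA.dotProduct_mulVec_comm, dotProduct_comm]
  have hAu := eq_smul_add_smul_of_dotProduct_eq_zero hu hw huw (A *ᵥ u)
  have hAw := eq_smul_add_smul_of_dotProduct_eq_zero hu hw huw (A *ᵥ w)
  unfold rayleighQuotient
  rw [hwu] at hAu
  set a := u ⬝ᵥ (A *ᵥ u)
  set b := u ⬝ᵥ (A *ᵥ w)
  set c := w ⬝ᵥ (A *ᵥ w)
  rw [hAw, mulVec_add, mulVec_smul, mulVec_smul, hAu, hAw]
  match_scalars
  · field_simp
  · field_simp; ring

theorem exists_mulVec_sub_smul_eq_smul {A : Matrix (Fin 2) (Fin 2) ℝ} (hA : A.PosDef)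
    {u w : Fin 2 → ℝ} (hu : u ≠ 0) (hw : w ≠ 0) (huw : u ⬝ᵥ w = 0) {H₁₁ H₁₂ H₂₂ β : ℝ}
    (hH₁₁ : H₁₁ = rayleighQuotient A u)
    (hH₁₂ : H₁₂ = (u ⬝ᵥ (A *ᵥ w)) / (√(u ⬝ᵥ u) * √(w ⬝ᵥ w)))
    (hH₂₂ : H₂₂ = rayleighQuotient A w)
    (hβ : β = 2 / ((H₁₁ + H₂₂) + √((H₁₁ - H₂₂) ^ 2 + 4 * H₁₂ ^ 2))) :
    ∃ μ : ℝ, A *ᵥ (w - β • (A *ᵥ w)) = μ • (w - β • (A *ᵥ w)) := by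
  set D := √((H₁₁ - H₂₂) ^ 2 + 4 * H₁₂ ^ 2)
  have hD : D ^ 2 = (H₁₁ - H₂₂) ^ 2 + 4 * H₁₂ ^ 2 := Real.sq_sqrt (by positivity)
  have hH₁₂sq : H₁₂ ^ 2 = (u ⬝ᵥ (A *ᵥ w)) ^ 2 / ((u ⬝ᵥ u) * (w ⬝ᵥ w)) := by
    rw [hH₁₂, div_pow, mul_pow, Real.sq_sqrt (dotProduct_self_pos hu).le,
      Real.sq_sqrt (dotProduct_self_pos hw).le]
  -- `β` is the reciprocal of the larger eigenvalue `(H₁₁ + H₂₂ + D) / 2` of the matrix `H`.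
  have hmax : 0 < (H₁₁ + H₂₂ + D) / 2 := by
    have := hH₁₁ ▸ rayleighQuotient_pos hA hu
    have := hH₂₂ ▸ rayleighQuotient_pos hA hw
    have : 0 ≤ D := Real.sqrt_nonneg _
    linarith
  refine ⟨(H₁₁ + H₂₂ - D) / 2, ?_⟩
  rw [hβ, show 2 / (H₁₁ + H₂₂ + D) = ((H₁₁ + H₂₂ + D) / 2)⁻¹ by field_simp]
  refine mulVec_sub_inv_smul_mulVec hmax.ne' ?_
  rw [mulVec_mulVec_eq_of_dotProduct_eq_zero hA.isSymm hu hw huw, ← hH₁₁, ← hH₂₂, ← hH₁₂sq]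
  match_scalars
  · ring
  · linear_combination -hD / 4

/-- Theorem 1 (finite termination on two-dimensional strongly convex quadratics),
instance `r = 1`: inserting the new stepsize (new2) at iteration `k₀` into the
(glstep1) method gives `g_{k₀+3} = 0`. -/
theorem finite_termination {A M : Matrix (Fin 2) (Fin 2) ℝ}
    (hA : A.PosDef) (hM : M.PosDef) (hcomm : M * A = A * M)
    (k₀ : ℕ) (hk₀ : 2 ≤ k₀)
    (g : ℕ → Fin 2 → ℝ) (α : ℕ → ℝ)
    (hrec : ∀ j, g (j + 1) = g j - α j • (A *ᵥ g j))
    (hstep : ∀ j, 1 ≤ j → j ≤ k₀ + 2 → j ≠ k₀ →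
      α j = (g (j - 1) ⬝ᵥ (M *ᵥ g (j - 1))) / (g (j - 1) ⬝ᵥ (M *ᵥ (A *ᵥ g (j - 1)))))
    (hgne : ∀ j, j ≤ k₀ + 2 → g j ≠ 0)
    (q : Fin 2 → ℝ) (hq0 : q ≠ 0)
    (hq : q - α (k₀ - 2) • (A *ᵥ q) = g (k₀ - 2))
    (H₁₁ H₁₂ H₂₂ : ℝ)
    (hH₁₁ : H₁₁ = ((M *ᵥ q) ⬝ᵥ (A *ᵥ (M *ᵥ q))) / ((M *ᵥ q) ⬝ᵥ (M *ᵥ q)))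
    (hH₁₂ : H₁₂ = ((M *ᵥ q) ⬝ᵥ (A *ᵥ g k₀)) /
      (Real.sqrt ((M *ᵥ q) ⬝ᵥ (M *ᵥ q)) * Real.sqrt (g k₀ ⬝ᵥ g k₀)))
    (hH₂₂ : H₂₂ = (g k₀ ⬝ᵥ (A *ᵥ g k₀)) / (g k₀ ⬝ᵥ g k₀))
    (hαk₀ : α k₀ = 2 / ((H₁₁ + H₂₂) + Real.sqrt ((H₁₁ - H₂₂) ^ 2 + 4 * H₁₂ ^ 2))) :
    g (k₀ + 3) = 0 := by
  obtain ⟨k, rfl⟩ : ∃ k, k₀ = k + 2 := ⟨k₀ - 2, by omega⟩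
  have hden : g k ⬝ᵥ (M *ᵥ (A *ᵥ g k)) ≠ 0 := by
    simpa only [mulVec_mulVec] using
      ((hM.mul_of_commute hA hcomm).dotProduct_mulVec_pos' (hgne k (by omega))).ne'
  have horth : (M *ᵥ q) ⬝ᵥ g (k + 2) = 0 :=
    mulVec_dotProduct_add_two_eq_zero hA.isSymm hM.isSymm hcomm hrec hq
      (hstep (k + 1) (by omega) (by omega) (by omega)) hden
  have hMq : M *ᵥ q ≠ 0 := fun h ↦
    (hM.dotProduct_mulVec_pos' hq0).ne' (by rw [h, dotProduct_zero])
  obtain ⟨μ, heig⟩ := exists_mulVec_sub_smul_eq_smul hA hMq (hgne (k + 2) (by omega)) horth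
    hH₁₁ hH₁₂ hH₂₂ hαk₀
  rw [← hrec] at heig
  exact add_two_eq_zero_of_mulVec_eq_smul hA hM hrec (hgne (k + 3) (by omega)) heig
    (hstep (k + 4) (by omega) (by omega) (by omega))
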